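/- Let d ≥ 1, let U ⊆ ℝ^d × ℝ × ℝ^d be an open set containing a point (x₀, 0, ξ₀) with (x₀,ξ₀) ≠ 0, and let φ : U → ℝ be twice continuously differentiable, satisfying ∂_t φ(x,t;ξ) = √( |x|² + |∇_x φ(x,t;ξ)|² ) on U and φ(x,0;ξ) = x·ξ for all (x,0,ξ) ∈ U. Then ∂_t² φ(x₀, 0; ξ₀) = (x₀·ξ₀) / (|x₀|² + |ξ₀|²). -/

import Mathlib

open MeasureTheory Real InnerProductSpace

section Aux


variable {E : Type*} [NormedAddCommGroup E] [InnerProductSpace ℝ E] [CompleteSpace E]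

local notation "⟪" x ", " y "⟫" => @inner ℝ _ _ x y

-- gradient of x ↦ ⟪x, ξ⟫ is ξ
theorem auxGradInner (ξ x : E) : HasGradientAt (fun y : E => (inner ℝ y ξ : ℝ)) ξ x := by
  have h : HasFDerivAt (fun y : E => (inner ℝ y ξ : ℝ)) (innerSL ℝ ξ) x := by
    have := (innerSL ℝ ξ).hasFDerivAt (x := x)
    refine this.congr_of_eventuallyEq ?_
    filter_upwards with y
    simp [real_inner_comm]
  have := h.hasGradientAt
  have he : (toDual ℝ E).symm ((innerSL ℝ) ξ) = ξ :=
    (toDual ℝ E).symm_apply_eq.mpr (by ext y; simp)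
  rwa [he] at this

set_option maxHeartbeats 1600000 in
theorem aux15 (U : Set (E × ℝ × E)) (hU : IsOpen U)
    (x₀ ξ₀ : E) (hmem : (x₀, (0:ℝ), ξ₀) ∈ U)
    (hne : ¬(x₀ = 0 ∧ ξ₀ = 0))
    (φ : E × ℝ × E → ℝ)
    (hφ : ContDiffOn ℝ 2 φ U)
    (heik : ∀ w ∈ U,
      deriv (fun t => φ (w.1, t, w.2.2)) w.2.1 =
        Real.sqrt (‖w.1‖ ^ 2 + ‖gradient (fun x => φ (x, w.2.1, w.2.2)) w.1‖ ^ 2))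
    (hinit : ∀ x ξ : E, (x, (0:ℝ), ξ) ∈ U → φ (x, 0, ξ) = (inner ℝ x ξ : ℝ)) :
    deriv (deriv (fun t => φ (x₀, t, ξ₀))) 0 =
      (inner ℝ x₀ ξ₀ : ℝ) / (‖x₀‖ ^ 2 + ‖ξ₀‖ ^ 2) := by
  classical
  set S : ℝ := ‖x₀‖ ^ 2 + ‖ξ₀‖ ^ 2 with hSdef
  have hS0 : (0:ℝ) < S := by
    rcases not_and_or.1 hne with h | h
    · exact add_pos_of_pos_of_nonneg (pow_pos (norm_pos_iff.2 h) 2) (sq_nonneg _)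
    · exact add_pos_of_nonneg_of_pos (sq_nonneg _) (pow_pos (norm_pos_iff.2 h) 2)
  -- differentiability
  have hdiffU : ∀ w ∈ U, DifferentiableAt ℝ φ w := fun w hw =>
    (hφ.contDiffAt (hU.mem_nhds hw)).differentiableAt two_ne_zero
  have hΦc1 : ContDiffAt ℝ 1 (fderiv ℝ φ) (x₀, (0:ℝ), ξ₀) :=
    (hφ.contDiffAt (hU.mem_nhds hmem)).fderiv_right le_rfl
  set Ψ : (E × ℝ × E) →L[ℝ] (E × ℝ × E) →L[ℝ] ℝ :=
    fderiv ℝ (fderiv ℝ φ) (x₀, (0:ℝ), ξ₀) with hΨdef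
  have hΨ : HasFDerivAt (fderiv ℝ φ) Ψ (x₀, (0:ℝ), ξ₀) :=
    (hΦc1.differentiableAt one_ne_zero).hasFDerivAt
  have hsymm : ∀ v w : E × ℝ × E, Ψ v w = Ψ w v := by
    intro v w
    refine second_derivative_symmetric_of_eventually (f := φ) ?_ hΨ v w
    filter_upwards [hU.mem_nhds hmem] with y hy
    exact (hdiffU y hy).hasFDerivAt
  -- curves
  have hcurve : ∀ (x ξ : E) (t : ℝ),
      HasDerivAt (fun s : ℝ => ((x, s, ξ) : E × ℝ × E)) ((0:E), (1:ℝ), (0:E)) t :=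
    fun x ξ t => (hasDerivAt_const t x).prodMk ((hasDerivAt_id t).prodMk (hasDerivAt_const t ξ))
  have hderiv_t : ∀ (x : E) (t : ℝ) (ξ : E), (x, t, ξ) ∈ U →
      HasDerivAt (fun s => φ (x, s, ξ)) (fderiv ℝ φ (x, t, ξ) ((0:E), (1:ℝ), (0:E))) t :=
    fun x t ξ h => (hdiffU _ h).hasFDerivAt.comp_hasDerivAt t (hcurve x ξ t)
  -- slice in x
  set ix : E →L[ℝ] E × ℝ × E := (ContinuousLinearMap.id ℝ E).prod 0 with hixdef
  have hslice : ∀ (x : E) (t : ℝ) (ξ : E), (x, t, ξ) ∈ U →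
      HasFDerivAt (fun y => φ (y, t, ξ)) ((fderiv ℝ φ (x, t, ξ)).comp ix) x := by
    intro x t ξ h
    exact (hdiffU _ h).hasFDerivAt.comp x
      ((hasFDerivAt_id x).prodMk (hasFDerivAt_const ((t, ξ) : ℝ × E) x))
  have hgradval : ∀ (x : E) (t : ℝ) (ξ : E), (x, t, ξ) ∈ U →
      gradient (fun y => φ (y, t, ξ)) x
        = (toDual ℝ E).symm ((fderiv ℝ φ (x, t, ξ)).comp ix) :=
    fun x t ξ h => (hslice x t ξ h).hasGradientAt.gradient
  -- gradient at t = 0 is ξ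
  have hgrad0 : ∀ (x ξ : E), (x, (0:ℝ), ξ) ∈ U →
      gradient (fun y => φ (y, (0:ℝ), ξ)) x = ξ := by
    intro x ξ h
    have hopen : IsOpen {y : E | ((y, (0:ℝ), ξ) : E × ℝ × E) ∈ U} :=
      hU.preimage (by fun_prop)
    have heq : (fun y => φ (y, (0:ℝ), ξ)) =ᶠ[nhds x] (fun y : E => (inner ℝ y ξ : ℝ)) := by
      filter_upwards [hopen.mem_nhds h] with y hy using hinit y ξ hy
    exact ((auxGradInner ξ x).congr_of_eventuallyEq heq).gradient
  -- the map ℓ ↦ toDual.symm (ℓ ∘ ix) as a continuous linear map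
  set C1 : ((E × ℝ × E) →L[ℝ] ℝ) →L[ℝ] (E →L[ℝ] ℝ) :=
    (ContinuousLinearMap.compL ℝ E (E × ℝ × E) ℝ).flip ix with hC1def
  set C2 : (E →L[ℝ] ℝ) →L[ℝ] E :=
    ((toDual ℝ E).symm.toContinuousLinearEquiv :
      (E →L[ℝ] ℝ) ≃L[ℝ] E).toContinuousLinearMap with hC2def
  set M : ((E × ℝ × E) →L[ℝ] ℝ) →L[ℝ] E := C2.comp C1 with hMdef
  have hMval : ∀ ℓ : (E × ℝ × E) →L[ℝ] ℝ, M ℓ = (toDual ℝ E).symm (ℓ.comp ix) := by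
    intro ℓ; rfl
  set G : ℝ → E := fun t => M (fderiv ℝ φ (x₀, t, ξ₀)) with hGdef
  have hGval : ∀ t : ℝ, (x₀, t, ξ₀) ∈ U →
      gradient (fun y => φ (y, t, ξ₀)) x₀ = G t := by
    intro t ht; rw [hgradval x₀ t ξ₀ ht, hGdef]; exact (hMval _).symm
  have hG0 : G 0 = ξ₀ := by
    rw [← hGval 0 hmem, hgrad0 x₀ ξ₀ hmem]
  set G' : E := M (Ψ ((0:E), (1:ℝ), (0:E))) with hG'def
  have hGderiv : HasDerivAt G G' 0 := by
    have h1 : HasDerivAt (fun t => fderiv ℝ φ (x₀, t, ξ₀)) (Ψ ((0:E), (1:ℝ), (0:E))) 0 :=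
      HasFDerivAt.comp_hasDerivAt (l := fderiv ℝ φ) (0:ℝ) hΨ (hcurve x₀ ξ₀ 0)
    exact HasFDerivAt.comp_hasDerivAt (l := M) (0:ℝ) M.hasFDerivAt h1
  have hG'pair : ∀ v : E, (inner ℝ G' v : ℝ) = Ψ ((v, (0:ℝ), (0:E))) ((0:E), (1:ℝ), (0:E)) := by
    intro v
    rw [hG'def, hMval]
    rw [toDual_symm_apply]
    have : (Ψ ((0:E), (1:ℝ), (0:E))).comp ix v = Ψ ((0:E), (1:ℝ), (0:E)) (v, (0:ℝ), (0:E)) := rfl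
    rw [this]
    exact hsymm _ _
  -- mixed partial via initial condition
  have hopen0 : IsOpen {y : E | ((y, (0:ℝ), ξ₀) : E × ℝ × E) ∈ U} := hU.preimage (by fun_prop)
  set k : E → ℝ := fun x => fderiv ℝ φ (x, (0:ℝ), ξ₀) ((0:E), (1:ℝ), (0:E)) with hkdef
  have hkfd : HasFDerivAt k
      ((ContinuousLinearMap.apply ℝ ℝ (((0:E), (1:ℝ), (0:E)) : E × ℝ × E)).comp (Ψ.comp ix)) x₀ := by
    have hcx : HasFDerivAt (fun x : E => ((x, (0:ℝ), ξ₀) : E × ℝ × E)) ix x₀ :=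
      (hasFDerivAt_id x₀).prodMk (hasFDerivAt_const (((0:ℝ), ξ₀) : ℝ × E) x₀)
    exact (ContinuousLinearMap.apply ℝ ℝ (((0:E), (1:ℝ), (0:E)) : E × ℝ × E)).hasFDerivAt.comp x₀
      (hΨ.comp x₀ hcx)
  have hkev : k =ᶠ[nhds x₀] fun x => Real.sqrt (‖x‖ ^ 2 + ‖ξ₀‖ ^ 2) := by
    filter_upwards [hopen0.mem_nhds hmem] with x hx
    have h1 := (hderiv_t x 0 ξ₀ hx).deriv
    have h2 : deriv (fun t => φ (x, t, ξ₀)) 0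
        = Real.sqrt (‖x‖ ^ 2 + ‖gradient (fun y => φ (y, (0:ℝ), ξ₀)) x‖ ^ 2) :=
      heik (x, (0:ℝ), ξ₀) hx
    rw [hgrad0 x ξ₀ hx] at h2
    rw [hkdef]
    simp only
    rw [← h1]
    exact h2
  have hsne : Real.sqrt S ≠ 0 := (Real.sqrt_pos.2 hS0).ne'
  have hrhs : HasFDerivAt (fun x : E => Real.sqrt (‖x‖ ^ 2 + ‖ξ₀‖ ^ 2))
      ((1 / (2 * Real.sqrt S)) • ((2:ℕ) • (innerSL ℝ x₀))) x₀ := by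
    have h1 : HasFDerivAt (fun x : E => ‖x‖ ^ 2 + ‖ξ₀‖ ^ 2) ((2:ℕ) • (innerSL ℝ x₀)) x₀ := by
      have h0 := (hasFDerivAt_id x₀).norm_sq
      have := h0.add_const (‖ξ₀‖ ^ 2)
      simpa using this
    have hne0 : (fun x : E => ‖x‖ ^ 2 + ‖ξ₀‖ ^ 2) x₀ ≠ 0 := by
      simp only; rw [← hSdef]; exact hS0.ne'
    have h2 := h1.sqrt hne0
    rwa [← hSdef] at h2
  have huniq := (hkfd.congr_of_eventuallyEq hkev.symm).unique hrhs
  have hmix : Ψ ((ξ₀, (0:ℝ), (0:E)) : E × ℝ × E) (((0:E), (1:ℝ), (0:E)) : E × ℝ × E)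
      = (inner ℝ x₀ ξ₀ : ℝ) / Real.sqrt S := by
    have h3 := ContinuousLinearMap.ext_iff.1 huniq ξ₀
    have h4 : ((ContinuousLinearMap.apply ℝ ℝ (((0:E), (1:ℝ), (0:E)) : E × ℝ × E)).comp
        (Ψ.comp ix)) ξ₀ = Ψ ((ξ₀, (0:ℝ), (0:E)) : E × ℝ × E) (((0:E), (1:ℝ), (0:E)) : E × ℝ × E) := rfl
    rw [h4] at h3
    rw [h3]
    simp only [ContinuousLinearMap.smul_apply, innerSL_apply_apply, smul_eq_mul]
    field_simp
    ring
  -- final assembly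
  have hVt : ∀ᶠ t in nhds (0:ℝ), ((x₀, t, ξ₀) : E × ℝ × E) ∈ U := by
    have hc : Continuous fun t : ℝ => ((x₀, t, ξ₀) : E × ℝ × E) := by fun_prop
    exact hc.continuousAt.preimage_mem_nhds (hU.mem_nhds hmem)
  have hdd : deriv (fun t => φ (x₀, t, ξ₀)) =ᶠ[nhds (0:ℝ)]
      fun t => Real.sqrt (‖x₀‖ ^ 2 + ‖G t‖ ^ 2) := by
    filter_upwards [hVt] with t ht
    have h2 : deriv (fun s => φ (x₀, s, ξ₀)) t
        = Real.sqrt (‖x₀‖ ^ 2 + ‖gradient (fun y => φ (y, t, ξ₀)) x₀‖ ^ 2) :=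
      heik (x₀, t, ξ₀) ht
    rw [h2, hGval t ht]
  have hEq : deriv (deriv (fun t => φ (x₀, t, ξ₀))) 0
      = deriv (fun t => Real.sqrt (‖x₀‖ ^ 2 + ‖G t‖ ^ 2)) 0 := hdd.deriv_eq
  have hq : HasDerivAt (fun t => ‖x₀‖ ^ 2 + ‖G t‖ ^ 2) (2 * (inner ℝ ξ₀ G' : ℝ)) 0 := by
    have h0 := hGderiv.norm_sq
    rw [hG0] at h0
    exact h0.const_add (‖x₀‖ ^ 2)
  have hsq : HasDerivAt (fun t => Real.sqrt (‖x₀‖ ^ 2 + ‖G t‖ ^ 2))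
      ((2 * (inner ℝ ξ₀ G' : ℝ)) / (2 * Real.sqrt S)) 0 := by
    have hne0 : (fun t => ‖x₀‖ ^ 2 + ‖G t‖ ^ 2) 0 ≠ 0 := by
      simp only; rw [hG0, ← hSdef]; exact hS0.ne'
    have h2 := hq.sqrt hne0
    rwa [hG0, ← hSdef] at h2
  rw [hEq, hsq.deriv]
  have hinner : (inner ℝ ξ₀ G' : ℝ) = (inner ℝ x₀ ξ₀ : ℝ) / Real.sqrt S := by
    rw [real_inner_comm, hG'pair ξ₀, hmix]
  rw [hinner]
  have hsS : Real.sqrt S * Real.sqrt S = S := Real.mul_self_sqrt hS0.le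
  have harith : (2 : ℝ) * ((inner ℝ x₀ ξ₀ : ℝ) / Real.sqrt S) / (2 * Real.sqrt S)
      = (inner ℝ x₀ ξ₀ : ℝ) / (Real.sqrt S * Real.sqrt S) := by
    rw [mul_div_mul_left _ _ (two_ne_zero), div_div]
  rw [harith, hsS]

end Aux

open MeasureTheory Real

/-- for any C² solution of the eikonal equation
`∂_t φ = √(|x|² + |∇_x φ|²)` with `φ(x,0;ξ) = x·ξ` on an open set `U` containing
`(x₀, 0, ξ₀) ≠ 0`, the second time derivative at `(x₀, 0, ξ₀)` equals
`(x₀·ξ₀)/(|x₀|² + |ξ₀|²)`. -/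
theorem stmt15 (d : ℕ) (hd : 1 ≤ d)
    (U : Set (EuclideanSpace ℝ (Fin d) × ℝ × EuclideanSpace ℝ (Fin d))) (hU : IsOpen U)
    (x₀ ξ₀ : EuclideanSpace ℝ (Fin d)) (hmem : (x₀, (0:ℝ), ξ₀) ∈ U)
    (hne : ¬(x₀ = 0 ∧ ξ₀ = 0))
    (φ : EuclideanSpace ℝ (Fin d) × ℝ × EuclideanSpace ℝ (Fin d) → ℝ)
    (hφ : ContDiffOn ℝ 2 φ U)
    (heik : ∀ w ∈ U,
      deriv (fun t => φ (w.1, t, w.2.2)) w.2.1 =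
        Real.sqrt (‖w.1‖ ^ 2 + ‖gradient (fun x => φ (x, w.2.1, w.2.2)) w.1‖ ^ 2))
    (hinit : ∀ x ξ : EuclideanSpace ℝ (Fin d), (x, (0:ℝ), ξ) ∈ U →
      φ (x, 0, ξ) = (inner ℝ x ξ : ℝ)) :
    deriv (deriv (fun t => φ (x₀, t, ξ₀))) 0 =
      (inner ℝ x₀ ξ₀ : ℝ) / (‖x₀‖ ^ 2 + ‖ξ₀‖ ^ 2) := by
  exact aux15 U hU x₀ ξ₀ hmem hne φ hφ heik hinit
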